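/- For all natural numbers k ≥ 1 and n ≥ 1 with n not divisible by 4, the polynomials t_k and C_n have no common root. -/
import Mathlib


open Polynomial Real

noncomputable def t : ℕ → Polynomial ℝ
  | 0 => 2
  | 1 => Polynomial.X
  | (k+2) => Polynomial.X * t (k+1) - t k

noncomputable def Cpoly (n : ℕ) : Polynomial ℝ :=
  ∏ j ∈ Finset.Icc 1 ((n - 1) / 2),
    (Polynomial.X - Polynomial.C (2 * Real.cos (2 * j * Real.pi / n)))

lemma t_eval_cos (θ : ℝ) : ∀ k : ℕ, (t k).eval (2 * Real.cos θ) = 2 * Real.cos (k * θ)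
  | 0 => by simp [t]
  | 1 => by simp [t]
  | (k+2) => by
    rw [t]
    simp only [eval_sub, eval_mul, eval_X, t_eval_cos θ k, t_eval_cos θ (k+1)]
    have h1 : ((k:ℝ)+2) * θ = ((k:ℝ)+1) * θ + θ := by ring
    have h2 : (k:ℝ) * θ = ((k:ℝ)+1) * θ - θ := by ring
    push_cast
    rw [h1, h2, Real.cos_add, Real.cos_sub]
    ring

theorem t_Cpoly_no_common_root (k n : ℕ) (hk : 1 ≤ k) (hn : 1 ≤ n) (h4 : ¬ (4 ∣ n)) :
    ∀ x : ℝ, ¬((t k).eval x = 0 ∧ (Cpoly n).eval x = 0) := by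
  rintro x ⟨htk, hC⟩
  rw [Cpoly, Polynomial.eval_prod] at hC
  obtain ⟨j, hj, hx⟩ := Finset.prod_eq_zero_iff.mp hC
  simp only [eval_sub, eval_X, eval_C, sub_eq_zero] at hx
  set θ : ℝ := 2 * j * Real.pi / n with hθ
  rw [hx, t_eval_cos θ k] at htk
  have hcos : Real.cos (k * θ) = 0 := by linarith
  obtain ⟨m, hm⟩ := Real.cos_eq_zero_iff.mp hcos
  have hnR : (n:ℝ) ≠ 0 := by positivity
  have hπ : Real.pi ≠ 0 := Real.pi_ne_zero
  rw [hθ] at hm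
  have key : (4 * k * j : ℝ) = (n : ℝ) * (2 * m + 1) := by
    field_simp at hm
    nlinarith [hm, Real.pi_pos]
  have keyZ : (4 * k * j : ℤ) = (n : ℤ) * (2 * m + 1) := by exact_mod_cast key
  have hj1 : 1 ≤ j := (Finset.mem_Icc.mp hj).1
  have hpos : 0 < 2 * m + 1 := by
    by_contra hle
    push_neg at hle
    have h1 : (n : ℤ) * (2 * m + 1) ≤ 0 :=
      mul_nonpos_of_nonneg_of_nonpos (by positivity) hle
    have h2 : (0:ℤ) < 4 * k * j := by positivity
    omega
  set c : ℕ := (2 * m + 1).toNat with hc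
  have hcZ : (c : ℤ) = 2 * m + 1 := Int.toNat_of_nonneg (by omega)
  have keyN : 4 * k * j = n * c := by
    have : (4 * k * j : ℤ) = (n : ℤ) * c := by rw [hcZ]; exact keyZ
    exact_mod_cast this
  have hcodd : Odd c := by
    have : Odd ((c : ℤ)) := by rw [hcZ]; exact ⟨m, by ring⟩
    exact Int.odd_coe_nat c |>.mp this
  have hcop2 : Nat.Coprime 2 c := (Nat.coprime_two_left).mpr hcodd
  have hcop : Nat.Coprime 4 c := by
    have := hcop2.pow_left 2
    simpa using this
  have hdvd : (4 : ℕ) ∣ n * c := ⟨k * j, by linarith [keyN]⟩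
  exact h4 (hcop.dvd_of_dvd_mul_right hdvd)
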